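/- arXiv:2307.03750 — 2 statements merged into one kernel-verified Lean document; each statement's English description precedes it below -/
import Mathlib

section
/- Let G(V) be an ADMG, A, Y disjoint subsets of V, and suppose D is a district of the induced subgraph G_{Y*} that is not an intrinsic set of G(V). Let R = {d ∈ D : d has no directed-edge children inside D in the induced subgraph G_D}, and let ⟨D⟩ be the reachable closure of D in G(V). Then D and ⟨D⟩ are both R-rooted C-forests in G(V), and the pair (D, ⟨D⟩) forms a hedge for (Y, A) in G(V). -/
/-- A conditional acyclic directed mixed graph (CADMG) on vertex type `V`:
a directed edge relation `dir` with no directed cycles, a symmetric irreflexive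
bidirected edge relation `bi`, and a set `rnd` of random vertices (the remaining
vertices being fixed), such that no directed edge points into a fixed vertex and
no bidirected edge is incident to a fixed vertex.  An ADMG is the special case
`rnd = Set.univ`. -/
structure CADMG (V : Type*) where
  dir : V → V → Prop
  bi : V → V → Prop
  rnd : Set V
  acyclic : ∀ v, ¬ Relation.TransGen dir v v
  bi_symm : ∀ a b, bi a b → bi b a
  bi_irrefl : ∀ a, ¬ bi a a
  dir_rnd : ∀ a b, dir a b → b ∈ rnd
  bi_rnd : ∀ a b, bi a b → a ∈ rnd ∧ b ∈ rnd

namespace CADMG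

variable {V : Type*}

/-- A random vertex `r` is fixable if there is no other vertex `w` with both a
directed path from `r` to `w` and a bidirected path from `r` to `w`. -/
def Fixable (G : CADMG V) (r : V) : Prop :=
  r ∈ G.rnd ∧
    ¬ ∃ w, w ≠ r ∧ Relation.ReflTransGen G.dir r w ∧ Relation.ReflTransGen G.bi r w

/-- The fixing operator: move `r` from the random to the fixed vertices and delete
all directed edges into `r` and all bidirected edges incident to `r`. -/
def fix (G : CADMG V) (r : V) : CADMG V where
  dir a b := G.dir a b ∧ b ≠ r
  bi a b := G.bi a b ∧ a ≠ r ∧ b ≠ r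
  rnd := G.rnd \ {r}
  acyclic v h := G.acyclic v (Relation.TransGen.mono (fun _ _ hab => hab.1) v v h)
  bi_symm a b h := ⟨G.bi_symm a b h.1, h.2.2, h.2.1⟩
  bi_irrefl a h := G.bi_irrefl a h.1
  dir_rnd a b h := ⟨G.dir_rnd a b h.1, h.2⟩
  bi_rnd a b h := ⟨⟨(G.bi_rnd a b h.1).1, h.2.1⟩, (G.bi_rnd a b h.1).2, h.2.2⟩

/-- A sequence of vertices is a valid fixing sequence if it is empty, or its head is
fixable and its tail is valid in the graph obtained by fixing the head. -/
def Valid (G : CADMG V) : List V → Prop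
  | [] => True
  | r :: rest => G.Fixable r ∧ (G.fix r).Valid rest

/-- `φ_σ(G)`: the CADMG obtained by applying the fixing operators along the list `σ`. -/
def fixList (G : CADMG V) : List V → CADMG V
  | [] => G
  | r :: rest => (G.fix r).fixList rest

/-- A set `R` of random vertices is reachable if some ordering of the remaining random
vertices is a valid fixing sequence. -/
def Reachable (G : CADMG V) (R : Set V) : Prop :=
  ∃ σ : List V, G.Valid σ ∧ ∀ v, v ∈ σ ↔ v ∈ G.rnd \ R

/-- `C` is the reachable closure of `S`: the smallest reachable superset of `S`. -/
def IsReachableClosure (G : CADMG V) (S C : Set V) : Prop :=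
  G.Reachable C ∧ S ⊆ C ∧ ∀ T, G.Reachable T → S ⊆ T → C ⊆ T

/-- `D` is bidirected-connected (within `D` itself): `D` is nonempty and any two of its
elements are joined by a bidirected path staying inside `D`. -/
def BiConnected (G : CADMG V) (D : Set V) : Prop :=
  D.Nonempty ∧ ∀ a ∈ D, ∀ b ∈ D,
    Relation.ReflTransGen (fun x y => G.bi x y ∧ x ∈ D ∧ y ∈ D) a b

/-- An intrinsic set: reachable and bidirected-connected. -/
def Intrinsic (G : CADMG V) (R : Set V) : Prop :=
  G.Reachable R ∧ G.BiConnected R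

/-- The induced subgraph on a set `W` of vertices (vertices outside `W` become fixed
and lose all their edges). -/
def induce (G : CADMG V) (W : Set V) : CADMG V where
  dir a b := G.dir a b ∧ a ∈ W ∧ b ∈ W
  bi a b := G.bi a b ∧ a ∈ W ∧ b ∈ W
  rnd := G.rnd ∩ W
  acyclic v h := G.acyclic v (Relation.TransGen.mono (fun _ _ hab => hab.1) v v h)
  bi_symm a b h := ⟨G.bi_symm a b h.1, h.2.2, h.2.1⟩
  bi_irrefl a h := G.bi_irrefl a h.1
  dir_rnd a b h := ⟨G.dir_rnd a b h.1, h.2.2⟩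
  bi_rnd a b h := ⟨⟨(G.bi_rnd a b h.1).1, h.2.1⟩, (G.bi_rnd a b h.1).2, h.2.2⟩

/-- The districts of a CADMG: the connected components of its random vertices under
the bidirected edge relation. -/
def District (G : CADMG V) (D : Set V) : Prop :=
  ∃ v ∈ G.rnd, D = {w | Relation.ReflTransGen G.bi v w}

/-- `Y*`: the set of vertices having a directed path (possibly of length zero) to an
element of `Y` that does not intersect `A`. -/
def Ystar (G : CADMG V) (A Y : Set V) : Set V :=
  {v | ∃ y ∈ Y, Relation.ReflTransGen (fun a b => G.dir a b ∧ a ∉ A ∧ b ∉ A) v y}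

/-- `F` is an `R`-rooted C-forest: `R ⊆ F`, `F` is bidirected-connected in the induced
subgraph `G_F`, and there is a subgraph of `G_F` with vertex set `F` and a subset `E` of
its directed edges in which every element of `F` has a directed path (possibly of
length zero) to an element of `R`. -/
def CForest (G : CADMG V) (R F : Set V) : Prop :=
  R ⊆ F ∧ G.BiConnected F ∧
    ∃ E : V → V → Prop,
      (∀ a b, E a b → G.dir a b ∧ a ∈ F ∧ b ∈ F) ∧
      ∀ f ∈ F, ∃ r ∈ R, Relation.ReflTransGen E f r

/-- A hedge for `(Y, A)` in `G`: a pair `(F, F')` of `R`-rooted C-forests, for some common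
root set `R`, with `F ⊊ F'`, `F ∩ A = ∅`, `A ∩ (F' \ F) ≠ ∅`, and every element of `R`
has a directed path to an element of `Y` that does not intersect `A`. -/
def Hedge (G : CADMG V) (Y A : Set V) : Prop :=
  ∃ R F F', G.CForest R F ∧ G.CForest R F' ∧ F ⊂ F' ∧ F ∩ A = ∅ ∧
    (A ∩ (F' \ F)).Nonempty ∧
    ∀ r ∈ R, ∃ y ∈ Y, Relation.ReflTransGen (fun a b => G.dir a b ∧ a ∉ A ∧ b ∉ A) r y

end CADMG

/-! The district `D` is bidirected-connected, and in `G_D` every vertex has a directed path to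
a sink, so `D` is an `R`-rooted C-forest; not being intrinsic, `D` is not reachable, so
`D ⊊ ⟨D⟩`. Inside a reachable set `C`, a subset `T` closed under the bidirected edges of `G_C`,
or under directed parents in `G_C`, is again reachable: for `T ⊆ U ⊆ C`, a directed sink of
`U \ T` is fixable in `G_U`, so `U` can be shrunk to `T` one vertex at a time. Applied to the
bidirected component of `D` and to the ancestors of `D` in `G_⟨D⟩`, minimality of the closure
makes `⟨D⟩` bidirected-connected with every vertex an ancestor of `D`, hence an `R`-rooted
C-forest. Finally, if `⟨D⟩ \ D` missed `A`, then `⟨D⟩` would lie in `Y*` and, being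
bidirected-connected, inside the district `D`. -/

namespace CADMG

open Relation

variable {V : Type*} {G : CADMG V}

lemma reflTransGen_mem_right {r : V → V → Prop} {W : Set V} (hr : ∀ a b, r a b → b ∈ W)
    {a b : V} (ha : a ∈ W) (h : ReflTransGen r a b) : b ∈ W := by
  induction h with
  | refl => exact ha
  | tail _ hbc _ => exact hr _ _ hbc

lemma reflTransGen_mem_left {r : V → V → Prop} {T : Set V}
    (hr : ∀ a b, r a b → b ∈ T → a ∈ T) {a b : V} (h : ReflTransGen r a b) (hb : b ∈ T) :
    a ∈ T := by
  induction h using ReflTransGen.head_induction_on with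
  | refl => exact hb
  | head hac _ ih => exact hr _ _ hac ih

lemma reflTransGen_bi_symm {a b : V} (h : ReflTransGen G.bi a b) :
    ReflTransGen G.bi b a := by
  induction h with
  | refl => rfl
  | tail _ hbc ih => exact ih.head (G.bi_symm _ _ hbc)

lemma exists_dir_sink [Finite V] (G : CADMG V) {M : Set V} (hM : M.Nonempty) :
    ∃ c ∈ M, ∀ w ∈ M, ¬ TransGen G.dir c w := by
  have : IsTrans V (flip (TransGen G.dir)) := ⟨fun _ _ _ h₁ h₂ => h₂.trans h₁⟩
  have : Std.Irrefl (flip (TransGen G.dir)) := ⟨G.acyclic⟩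
  obtain ⟨c, hc, hmin⟩ :=
    (Finite.wellFounded_of_trans_of_irrefl (flip (TransGen G.dir))).has_min M hM
  exact ⟨c, hc, hmin⟩

@[simp]
lemma fixList_dir (σ : List V) (G : CADMG V) (a b : V) :
    (G.fixList σ).dir a b ↔ G.dir a b ∧ b ∉ σ := by
  induction σ generalizing G with
  | nil => simp [fixList]
  | cons r σ ih => simp only [fixList, ih, fix, List.mem_cons]; tauto

@[simp]
lemma fixList_bi (σ : List V) (G : CADMG V) (a b : V) :
    (G.fixList σ).bi a b ↔ G.bi a b ∧ a ∉ σ ∧ b ∉ σ := by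
  induction σ generalizing G with
  | nil => simp [fixList]
  | cons r σ ih => simp only [fixList, ih, fix, List.mem_cons]; tauto

@[simp]
lemma mem_fixList_rnd (σ : List V) (G : CADMG V) (a : V) :
    a ∈ (G.fixList σ).rnd ↔ a ∈ G.rnd ∧ a ∉ σ := by
  induction σ generalizing G with
  | nil => simp [fixList]
  | cons r σ ih =>
    simp only [fixList, ih, fix, List.mem_cons, Set.mem_sdiff, Set.mem_singleton_iff]; tauto

lemma valid_append (σ τ : List V) (G : CADMG V) :
    G.Valid (σ ++ τ) ↔ G.Valid σ ∧ (G.fixList σ).Valid τ := by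
  induction σ generalizing G with
  | nil => simp [Valid, fixList]
  | cons r σ ih => rw [List.cons_append, Valid, ih, Valid, fixList, and_assoc]

lemma reflTransGen_induce_dir_of_fixList {σ : List V} {S : Set V}
    (hσ : ∀ v, v ∈ σ ↔ v ∈ G.rnd \ S) {a b : V} (ha : a ∈ S)
    (h : ReflTransGen (G.fixList σ).dir a b) :
    ReflTransGen (G.induce S).dir a b := by
  induction h using ReflTransGen.head_induction_on with
  | refl => rfl
  | head hac _ ih =>
    obtain ⟨hac, hcσ⟩ := (fixList_dir σ G _ _).mp hac
    have hc : _ ∈ S := by_contra fun hc => hcσ ((hσ _).mpr ⟨G.dir_rnd _ _ hac, hc⟩)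
    exact (ih hc).head ⟨hac, ha, hc⟩

lemma induce_bi_of_fixList {σ : List V} {S : Set V} (hσ : ∀ v, v ∈ σ ↔ v ∈ G.rnd \ S)
    {a b : V} (h : (G.fixList σ).bi a b) : (G.induce S).bi a b := by
  obtain ⟨hab, haσ, hbσ⟩ := (fixList_bi σ G a b).mp h
  have hab' := G.bi_rnd a b hab
  exact ⟨hab, by_contra fun ha => haσ ((hσ a).mpr ⟨hab'.1, ha⟩),
    by_contra fun hb => hbσ ((hσ b).mpr ⟨hab'.2, hb⟩)⟩

/-- After fixing the vertices outside a reachable `S`, paths starting in `S` are exactly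
those of `G_S`, so a vertex fixable in `G_S` can be fixed next. -/
lemma Reachable.diff_singleton {S : Set V} {c : V} (hS : G.Reachable S)
    (hc : (G.induce S).Fixable c) : G.Reachable (S \ {c}) := by
  obtain ⟨σ, hσv, hσ⟩ := hS
  obtain ⟨⟨hcrnd, hcS⟩, hcfix⟩ := hc
  have hfix : (G.fixList σ).Fixable c := by
    refine ⟨(mem_fixList_rnd σ G c).mpr ⟨hcrnd, fun h => ((hσ c).mp h).2 hcS⟩, ?_⟩
    rintro ⟨w, hwc, hdir, hbi⟩
    exact hcfix ⟨w, hwc, reflTransGen_induce_dir_of_fixList hσ hcS hdir,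
      ReflTransGen.mono (fun _ _ => induce_bi_of_fixList hσ) _ _ hbi⟩
  refine ⟨σ ++ [c], (valid_append σ [c] G).mpr ⟨hσv, hfix, trivial⟩, fun v => ?_⟩
  simp only [List.mem_append, List.mem_singleton, hσ v, Set.mem_sdiff, Set.mem_singleton_iff]
  by_cases hv : v = c
  · subst hv; tauto
  · tauto

lemma Reachable.inter_rnd {S : Set V} (hS : G.Reachable S) : G.Reachable (S ∩ G.rnd) := by
  obtain ⟨σ, hσv, hσ⟩ := hS
  exact ⟨σ, hσv, fun v => by simp only [hσ v, Set.mem_sdiff, Set.mem_inter_iff]; tauto⟩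

lemma Reachable.of_forall_exists_fixable [Finite V] {S T : Set V} (hS : G.Reachable S)
    (hTS : T ⊆ S)
    (h : ∀ U, T ⊆ U → U ⊆ S → (U \ T).Nonempty → ∃ c ∈ U \ T, (G.induce U).Fixable c) :
    G.Reachable T := by
  obtain ⟨n, hn⟩ : ∃ n, (S \ T).ncard = n := ⟨_, rfl⟩
  induction n generalizing S with
  | zero =>
    have hST : S \ T = ∅ := (Set.ncard_eq_zero).mp hn
    rwa [(Set.sdiff_eq_empty.mp hST).antisymm hTS] at hS
  | succ n ih =>
    obtain ⟨c, hc, hcfix⟩ := h S hTS subset_rfl ((Set.ncard_pos).mp (by omega))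
    refine ih (hS.diff_singleton hcfix) (fun x hx => ⟨hTS hx, fun hxc => hc.2 (hxc ▸ hx)⟩)
      (fun U hTU hUS => h U hTU (hUS.trans Set.sdiff_subset)) ?_
    rw [Set.sdiff_sdiff_comm, Set.ncard_sdiff_singleton_of_mem hc, hn, Nat.add_sub_cancel]

lemma exists_fixable_of_bi_closed [Finite V] {T U : Set V} (hU : U ⊆ G.rnd)
    (hne : (U \ T).Nonempty) (hT : ∀ a b, (G.induce U).bi a b → b ∈ T → a ∈ T) :
    ∃ c ∈ U \ T, (G.induce U).Fixable c := by
  obtain ⟨c, hc, hsink⟩ := (G.induce U).exists_dir_sink hne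
  refine ⟨c, hc, ⟨hU hc.1, hc.1⟩, ?_⟩
  rintro ⟨w, hwc, hdir, hbi⟩
  obtain hcw | hcw := reflTransGen_iff_eq_or_transGen.mp hdir
  · exact hwc hcw
  have hwU : w ∈ U := reflTransGen_mem_right (fun _ _ h => h.2.2) hc.1 hcw.to_reflTransGen
  have hwT : w ∈ T := by_contra fun hwT => hsink w ⟨hwU, hwT⟩ hcw
  exact hc.2 (reflTransGen_mem_left hT hbi hwT)

lemma exists_fixable_of_dir_closed [Finite V] {T U : Set V} (hU : U ⊆ G.rnd)
    (hne : (U \ T).Nonempty) (hT : ∀ a b, (G.induce U).dir a b → b ∈ T → a ∈ T) :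
    ∃ c ∈ U \ T, (G.induce U).Fixable c := by
  obtain ⟨c, hc, hsink⟩ := (G.induce U).exists_dir_sink hne
  refine ⟨c, hc, ⟨hU hc.1, hc.1⟩, ?_⟩
  rintro ⟨w, hwc, hdir, -⟩
  obtain hcw | ⟨b, hcb, -⟩ := hdir.cases_head
  · exact hwc hcw.symm
  by_cases hb : b ∈ T
  · exact hc.2 (hT c b hcb hb)
  · exact hsink b ⟨hcb.2.2, hb⟩ (.single hcb)

lemma Reachable.setOf_induce_bi [Finite V] {C : Set V} {v : V} (hC : G.Reachable C)
    (hCrnd : C ⊆ G.rnd) (hv : v ∈ C) :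
    G.Reachable {w | ReflTransGen (G.induce C).bi v w} :=
  hC.of_forall_exists_fixable (fun _ => reflTransGen_mem_right (fun _ _ h => h.2.2) hv)
    fun _ _ hUC hne => exists_fixable_of_bi_closed (hUC.trans hCrnd) hne
      fun _ _ hab hb => ReflTransGen.tail hb
        ⟨G.bi_symm _ _ hab.1, hUC hab.2.2, hUC hab.2.1⟩

lemma Reachable.setOf_induce_dir [Finite V] {C D : Set V} (hC : G.Reachable C)
    (hCrnd : C ⊆ G.rnd) (hDC : D ⊆ C) :
    G.Reachable {x | ∃ d ∈ D, ReflTransGen (G.induce C).dir x d} := by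
  refine hC.of_forall_exists_fixable ?_ fun _ _ hUC hne =>
    exists_fixable_of_dir_closed (hUC.trans hCrnd) hne ?_
  · rintro x ⟨d, hd, hxd⟩
    obtain rfl | ⟨_, hxy, -⟩ := hxd.cases_head
    exacts [hDC hd, hxy.2.1]
  · rintro a b hab ⟨d, hd, hbd⟩
    exact ⟨d, hd, hbd.head ⟨hab.1, hUC hab.2.1, hUC hab.2.2⟩⟩

lemma biConnected_setOf_reflTransGen (G : CADMG V) (v : V) :
    G.BiConnected {w | ReflTransGen G.bi v w} := by
  set K := {w | ReflTransGen G.bi v w}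
  have hK : ∀ a ∈ K, ReflTransGen (G.induce K).bi v a := by
    intro a ha
    induction ha with
    | refl => rfl
    | tail hva hab ih => exact ih.tail ⟨hab, hva, hva.tail hab⟩
  exact ⟨⟨v, .refl⟩, fun a ha b hb => (reflTransGen_bi_symm (hK a ha)).trans (hK b hb)⟩

lemma BiConnected.of_induce {W D : Set V} (hD : (G.induce W).BiConnected D) :
    G.BiConnected D :=
  ⟨hD.1, fun a ha b hb => ReflTransGen.mono (fun _ _ h => ⟨h.1.1, h.2⟩) _ _ (hD.2 a ha b hb)⟩

lemma BiConnected.induce {W C : Set V} (hC : G.BiConnected C) (hCW : C ⊆ W) :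
    (G.induce W).BiConnected C :=
  ⟨hC.1, fun a ha b hb =>
    ReflTransGen.mono (fun _ _ h => ⟨⟨h.1, hCW h.2.1, hCW h.2.2⟩, h.2⟩) _ _ (hC.2 a ha b hb)⟩

lemma District.biConnected {D : Set V} (hD : G.District D) : G.BiConnected D := by
  obtain ⟨v, -, rfl⟩ := hD
  exact biConnected_setOf_reflTransGen G v

lemma District.subset_rnd {D : Set V} (hD : G.District D) : D ⊆ G.rnd := by
  obtain ⟨v, hv, rfl⟩ := hD
  exact fun _ => reflTransGen_mem_right (fun a b h => (G.bi_rnd a b h).2) hv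

lemma District.subset_of_biConnected {C D : Set V} (hD : G.District D)
    (hC : G.BiConnected C) (hDC : (D ∩ C).Nonempty) : C ⊆ D := by
  obtain ⟨v, -, rfl⟩ := hD
  obtain ⟨x, hvx, hx⟩ := hDC
  exact fun c hc => hvx.trans (ReflTransGen.mono (fun _ _ h => h.1) _ _ (hC.2 x hx c hc))

namespace IsReachableClosure

variable {S C : Set V}

lemma subset_rnd (hC : G.IsReachableClosure S C) (hS : S ⊆ G.rnd) : C ⊆ G.rnd :=
  fun _ hx => (hC.2.2 _ hC.1.inter_rnd (Set.subset_inter hC.2.1 hS) hx).2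

lemma biConnected [Finite V] (hC : G.IsReachableClosure S C) (hS : G.BiConnected S)
    (hCrnd : C ⊆ G.rnd) : G.BiConnected C := by
  obtain ⟨v, hv⟩ := hS.1
  have hK : C = {w | ReflTransGen (G.induce C).bi v w} := by
    refine (hC.2.2 _ (hC.1.setOf_induce_bi hCrnd (hC.2.1 hv)) fun s hs =>
      ReflTransGen.mono (fun _ _ h => ⟨h.1, hC.2.1 h.2.1, hC.2.1 h.2.2⟩) _ _
        (hS.2 v hv s hs)).antisymm ?_
    exact fun _ => reflTransGen_mem_right (fun _ _ h => h.2.2) (hC.2.1 hv)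
  rw [hK]
  exact (biConnected_setOf_reflTransGen _ v).of_induce

lemma exists_reflTransGen_dir [Finite V] (hC : G.IsReachableClosure S C)
    (hCrnd : C ⊆ G.rnd) : ∀ x ∈ C, ∃ s ∈ S, ReflTransGen (G.induce C).dir x s :=
  hC.2.2 _ (hC.1.setOf_induce_dir hCrnd hC.2.1) fun s hs => ⟨s, hs, .refl⟩

end IsReachableClosure

lemma cForest_setOf_sinks [Finite V] {F : Set V} (hF : G.BiConnected F) :
    G.CForest {f ∈ F | ∀ c ∈ F, ¬ G.dir f c} F := by
  refine ⟨Set.sep_subset _ _, hF, (G.induce F).dir, fun _ _ h => h, fun f hf => ?_⟩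
  obtain ⟨c, hfc, hsink⟩ := (G.induce F).exists_dir_sink
    (M := {x | ReflTransGen (G.induce F).dir f x}) ⟨f, .refl⟩
  have hcF : c ∈ F := reflTransGen_mem_right (fun _ _ h => h.2.2) hf hfc
  exact ⟨c, ⟨hcF, fun b hb hcb =>
    hsink b (hfc.tail ⟨hcb, hcF, hb⟩) (.single ⟨hcb, hcF, hb⟩)⟩, hfc⟩

lemma CForest.of_reflTransGen_dir {R F F' : Set V} (hF : G.CForest R F) (hFF' : F ⊆ F')
    (hbi : G.BiConnected F')
    (hanc : ∀ x ∈ F', ∃ f ∈ F, ReflTransGen (G.induce F').dir x f) :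
    G.CForest R F' := by
  obtain ⟨hRF, -, E, hE, hroot⟩ := hF
  refine ⟨hRF.trans hFF', hbi, (G.induce F').dir, fun _ _ h => h, fun x hx => ?_⟩
  obtain ⟨f, hf, hxf⟩ := hanc x hx
  obtain ⟨r, hr, hfr⟩ := hroot f hf
  have hE' : ∀ a b, E a b → (G.induce F').dir a b := fun a b h =>
    ⟨(hE a b h).1, hFF' (hE a b h).2.1, hFF' (hE a b h).2.2⟩
  exact ⟨r, hr, hxf.trans (ReflTransGen.mono hE' _ _ hfr)⟩

lemma ystar_disjoint {A Y : Set V} (hAY : Disjoint A Y) : Disjoint (G.Ystar A Y) A := by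
  refine Set.disjoint_left.mpr fun x ⟨y, hy, hxy⟩ hxA => ?_
  obtain rfl | ⟨_, hxz, -⟩ := hxy.cases_head
  exacts [Set.disjoint_left.mp hAY hxA hy, hxz.2.1 hxA]

lemma subset_ystar {A Y C : Set V} (hCA : Disjoint C A)
    (hanc : ∀ x ∈ C, ∃ y ∈ G.Ystar A Y, ReflTransGen (G.induce C).dir x y) :
    C ⊆ G.Ystar A Y := by
  intro x hx
  obtain ⟨y, ⟨z, hz, hyz⟩, hxy⟩ := hanc x hx
  exact ⟨z, hz, (ReflTransGen.mono (fun _ _ h => ⟨h.1, hCA.notMem_of_mem_left h.2.1,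
    hCA.notMem_of_mem_left h.2.2⟩) _ _ hxy).trans hyz⟩

lemma District.nonempty_inter_diff_of_ssubset {A Y C D : Set V}
    (hD : (G.induce (G.Ystar A Y)).District D) (hDA : D ∩ A = ∅) (hDC : D ⊂ C)
    (hC : G.BiConnected C)
    (hanc : ∀ x ∈ C, ∃ d ∈ D, ReflTransGen (G.induce C).dir x d) :
    (A ∩ (C \ D)).Nonempty := by
  by_contra hA
  have hCA : Disjoint C A := Set.disjoint_left.mpr fun x hxC hxA => by
    by_cases hxD : x ∈ D
    exacts [hDA.subset ⟨hxD, hxA⟩, hA ⟨x, hxA, hxC, hxD⟩]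
  have hDY : D ⊆ G.Ystar A Y := fun x hx => (hD.subset_rnd hx).2
  have hCY := subset_ystar hCA fun x hx =>
    (hanc x hx).imp fun d ⟨hd, hxd⟩ => ⟨hDY hd, hxd⟩
  obtain ⟨d, hd⟩ := hD.biConnected.1
  exact hDC.not_subset (hD.subset_of_biConnected (hC.induce hCY) ⟨d, hd, hDC.subset hd⟩)

end CADMG

theorem district_not_intrinsic_gives_hedge_general
    {V : Type*} [Fintype V] (G : CADMG V) (A Y : Set V) (hdisj : Disjoint A Y)
    (D : Set V) (hD : (G.induce (G.Ystar A Y)).District D)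
    (hni : ¬ G.Intrinsic D)
    (R : Set V) (hR : R = {d ∈ D | ∀ c ∈ D, ¬ G.dir d c})
    (C : Set V) (hC : G.IsReachableClosure D C) :
    G.CForest R D ∧ G.CForest R C ∧ D ⊂ C ∧ D ∩ A = ∅ ∧
      (A ∩ (C \ D)).Nonempty ∧
      (∀ r ∈ R, ∃ y ∈ Y,
        Relation.ReflTransGen (fun a b => G.dir a b ∧ a ∉ A ∧ b ∉ A) r y) ∧
      G.Hedge Y A := by
  have hDY : D ⊆ G.Ystar A Y := fun x hx => (hD.subset_rnd hx).2
  have hDrnd : D ⊆ G.rnd := fun x hx => (hD.subset_rnd hx).1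
  have hDA : D ∩ A = ∅ := (CADMG.ystar_disjoint hdisj).mono_left hDY |>.inter_eq
  have hbiD : G.BiConnected D := hD.biConnected.of_induce
  have cfD : G.CForest R D := hR ▸ CADMG.cForest_setOf_sinks hbiD
  have hDC : D ⊂ C := hC.2.1.ssubset_of_ne fun h => hni ⟨h ▸ hC.1, hbiD⟩
  have hCrnd : C ⊆ G.rnd := hC.subset_rnd hDrnd
  have hbiC : G.BiConnected C := hC.biConnected hbiD hCrnd
  have hanc := hC.exists_reflTransGen_dir hCrnd
  have cfC : G.CForest R C := cfD.of_reflTransGen_dir hDC.subset hbiC hanc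
  have hA : (A ∩ (C \ D)).Nonempty := hD.nonempty_inter_diff_of_ssubset hDA hDC hbiC hanc
  have hroots : ∀ r ∈ R, ∃ y ∈ Y,
      Relation.ReflTransGen (fun a b => G.dir a b ∧ a ∉ A ∧ b ∉ A) r y :=
    fun r hr => hDY (cfD.1 hr)
  exact ⟨cfD, cfC, hDC, hDA, hA, hroots, R, D, C, cfD, cfC, hDC, hDA, hA, hroots⟩

/-- If `D` is a district of `G_{Y*}` that is not intrinsic in `G`,
`R` is the set of elements of `D` without directed-edge children inside `D` (in `G_D`),
and `⟨D⟩` is the reachable closure of `D`, then `D` and `⟨D⟩` are both `R`-rooted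
C-forests and the pair `(D, ⟨D⟩)` forms a hedge for `(Y, A)` in `G`. -/
theorem district_not_intrinsic_gives_hedge
    {V : Type*} [Fintype V] (G : CADMG V) (hG : G.rnd = Set.univ)
    (A Y : Set V) (hdisj : Disjoint A Y)
    (D : Set V) (hD : (G.induce (G.Ystar A Y)).District D)
    (hni : ¬ G.Intrinsic D)
    (R : Set V) (hR : R = {d ∈ D | ∀ c ∈ D, ¬ G.dir d c})
    (C : Set V) (hC : G.IsReachableClosure D C) :
    G.CForest R D ∧ G.CForest R C ∧ D ⊂ C ∧ D ∩ A = ∅ ∧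
      (A ∩ (C \ D)).Nonempty ∧
      (∀ r ∈ R, ∃ y ∈ Y,
        Relation.ReflTransGen (fun a b => G.dir a b ∧ a ∉ A ∧ b ∉ A) r y) ∧
      G.Hedge Y A :=
  district_not_intrinsic_gives_hedge_general G A Y hdisj D hD hni R hR C hC
end

section
/- There exists an ADMG G(V) and disjoint subsets A, Y of V such that every district of the induced subgraph G_{Y*} is an intrinsic set of G(V) (so the ID algorithm identifies p(Y | do(a)) in G), and yet there exist subsets Y' ⊆ Y and A' ⊆ A for which a hedge for (Y', A') exists in G(V). Hence the hedge criterion of Corollary 3 of Shpitser and Pearl (2006) is false as stated. -/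
/-! Take `0 → 1 → 2`, `0 ↔ 1` with `A = {0, 1}` and `Y = {2}`. The only parent of `2` lies in
`A`, so `Y* = {2}`; fixing `1` (its bidirected component `{0, 1}` meets its descendants
`{1, 2}` only in `1`) and then the now isolated `0` shows that `{2}` is intrinsic. Yet the bow
`0 → 1`, `0 ↔ 1` followed by `1 → 2` is a hedge for `({2}, {0})`: intervening on `0` alone is
not identified, although intervening on all of `A` is. -/

theorem Relation.ReflTransGen.mem_of_closed {α : Type*} {r : α → α → Prop} {S : Set α}
    (hS : ∀ a b, r a b → a ∈ S → b ∈ S) {a b : α} (h : Relation.ReflTransGen r a b)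
    (ha : a ∈ S) : b ∈ S := by
  induction h with
  | refl => exact ha
  | tail _ hbc ih => exact hS _ _ hbc ih

namespace CADMG

variable {V : Type*}

theorem fixable_of_closed {G : CADMG V} {r : V} (hr : r ∈ G.rnd) (S T : Set V)
    (hS : ∀ a b, G.bi a b → a ∈ S → b ∈ S) (hT : ∀ a b, G.dir a b → a ∈ T → b ∈ T)
    (hrS : r ∈ S) (hrT : r ∈ T) (hST : S ∩ T ⊆ {r}) : G.Fixable r := by
  refine ⟨hr, fun ⟨w, hw, hdir, hbi⟩ => hw ?_⟩
  exact hST ⟨hbi.mem_of_closed hS hrS, hdir.mem_of_closed hT hrT⟩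

theorem biConnected_singleton (G : CADMG V) (v : V) : G.BiConnected {v} := by
  refine ⟨Set.singleton_nonempty v, ?_⟩
  rintro a rfl b rfl
  exact .refl

theorem District.eq_singleton {G : CADMG V} {v : V} (hrnd : G.rnd ⊆ {v}) {D : Set V}
    (hD : G.District D) : D = {v} := by
  have hbi : ∀ a b, ¬ G.bi a b := fun a b hab => by
    obtain ⟨ha, hb⟩ := G.bi_rnd a b hab
    rw [hrnd ha, hrnd hb] at hab
    exact G.bi_irrefl v hab
  obtain ⟨u, hu, rfl⟩ := hD
  obtain rfl := hrnd hu
  ext w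
  rw [Set.mem_ofPred_eq, Relation.ReflTransGen.cases_head_iff]
  simp [hbi, eq_comm]

theorem ystar_subset {G : CADMG V} {A Y : Set V}
    (hY : ∀ a b, G.dir a b → a ∉ A → b ∈ Y → a ∈ Y) : G.Ystar A Y ⊆ Y := by
  rintro v ⟨y, hy, hvy⟩
  induction hvy using Relation.ReflTransGen.head_induction_on with
  | refl => exact hy
  | head hab _ ih => exact hY _ _ hab.1 hab.2.1 ih

theorem cForest_singleton (G : CADMG V) (r : V) : G.CForest {r} {r} :=
  ⟨subset_rfl, G.biConnected_singleton r, fun _ _ => False, fun _ _ h => h.elim,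
    fun _ hf => ⟨r, rfl, hf ▸ .refl⟩⟩

theorem cForest_pair {G : CADMG V} {a b : V} (hdir : G.dir a b) (hbi : G.bi a b) :
    G.CForest {b} {a, b} := by
  refine ⟨Set.singleton_subset_iff.2 (Or.inr rfl), ⟨⟨a, Or.inl rfl⟩, ?_⟩,
    fun x y => x = a ∧ y = b, ?_, ?_⟩
  · rintro x (rfl | rfl) y (rfl | rfl)
    · exact .refl
    · exact .single ⟨hbi, Or.inl rfl, Or.inr rfl⟩
    · exact .single ⟨G.bi_symm _ _ hbi, Or.inr rfl, Or.inl rfl⟩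
    · exact .refl
  · rintro x y ⟨rfl, rfl⟩
    exact ⟨hdir, Or.inl rfl, Or.inr rfl⟩
  · rintro f (rfl | rfl)
    · exact ⟨b, rfl, .single ⟨rfl, rfl⟩⟩
    · exact ⟨f, rfl, .refl⟩

/-- The witnessing forests are `{b} ⊊ {a, b}`, both rooted at `b`. -/
theorem hedge_of_bow {G : CADMG V} {Y : Set V} {a b : V} (hdir : G.dir a b) (hbi : G.bi a b)
    (hbY : ∃ y ∈ Y, Relation.ReflTransGen (fun x z => G.dir x z ∧ x ∉ ({a} : Set V) ∧
      z ∉ ({a} : Set V)) b y) : G.Hedge Y {a} := by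
  have hab : a ≠ b := fun h => G.bi_irrefl a (h ▸ hbi)
  refine ⟨{b}, {b}, {a, b}, G.cForest_singleton b, cForest_pair hdir hbi,
    Set.ssubset_insert hab, ?_, ⟨a, rfl, Or.inl rfl, hab⟩, ?_⟩
  · simpa [Set.eq_empty_iff_forall_notMem] using hab.symm
  · rintro r rfl
    exact hbY

end CADMG

open CADMG

def bowGraph : CADMG (Fin 3) where
  dir a b := (a = 0 ∧ b = 1) ∨ (a = 1 ∧ b = 2)
  bi a b := (a = 0 ∧ b = 1) ∨ (a = 1 ∧ b = 0)
  rnd := Set.univ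
  acyclic v h := by
    refine lt_irrefl v (Relation.transGen_minimal (r' := (· < ·)) ?_ v v h)
    rintro a b (⟨rfl, rfl⟩ | ⟨rfl, rfl⟩) <;> decide
  bi_symm := by rintro a b (⟨rfl, rfl⟩ | ⟨rfl, rfl⟩) <;> simp
  bi_irrefl := by rintro a (⟨rfl, h⟩ | ⟨rfl, h⟩) <;> exact absurd h (by decide)
  dir_rnd _ _ _ := Set.mem_univ _
  bi_rnd _ _ _ := ⟨Set.mem_univ _, Set.mem_univ _⟩

theorem bowGraph_reachable_two : bowGraph.Reachable {2} := by
  refine ⟨[1, 0], ⟨?_, ?_, trivial⟩, fun v => by fin_cases v <;> simp [bowGraph]⟩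
  · exact fixable_of_closed (Set.mem_univ _) {0, 1} {1, 2}
      (by rintro a b (⟨rfl, rfl⟩ | ⟨rfl, rfl⟩) _ <;> simp)
      (by rintro a b (⟨rfl, rfl⟩ | ⟨rfl, rfl⟩) _ <;> simp)
      (by simp) (by simp) (by intro x; fin_cases x <;> simp)
  · exact fixable_of_closed (by simp [fix, bowGraph]) {0} Set.univ
      (by rintro a b ⟨(⟨rfl, rfl⟩ | ⟨rfl, rfl⟩), h₀, h₁⟩ _ <;> simp_all)
      (fun _ _ _ _ => Set.mem_univ _) rfl (Set.mem_univ _) Set.inter_subset_left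

/-- There is an ADMG `G` and disjoint `A`, `Y` such that every district of
`G_{Y*}` is intrinsic in `G` (so the ID algorithm identifies `p(Y | do(a))`), and yet a
hedge for `(Y', A')` exists in `G` for some `Y' ⊆ Y`, `A' ⊆ A`.  Hence the hedge
criterion of Corollary 3 of Shpitser and Pearl (2006) is false as stated. -/
theorem corollary3_hedge_criterion_false :
    ∃ (V : Type) (_ : Fintype V) (G : CADMG V) (A Y : Set V),
      G.rnd = Set.univ ∧ Disjoint A Y ∧
      (∀ D, (G.induce (G.Ystar A Y)).District D → G.Intrinsic D) ∧
      ∃ Y' A' : Set V, Y' ⊆ Y ∧ A' ⊆ A ∧ G.Hedge Y' A' := by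
  refine ⟨Fin 3, inferInstance, bowGraph, {0, 1}, {2}, rfl, by simp, ?_,
    {2}, {0}, subset_rfl, by simp, ?_⟩
  · have hYstar : bowGraph.Ystar {0, 1} {2} ⊆ {2} :=
      ystar_subset (by rintro a b (⟨rfl, rfl⟩ | ⟨rfl, rfl⟩) <;> simp)
    intro D hD
    rw [District.eq_singleton (Set.inter_subset_right.trans hYstar) hD]
    exact ⟨bowGraph_reachable_two, bowGraph.biConnected_singleton 2⟩
  · exact hedge_of_bow (Or.inl ⟨rfl, rfl⟩) (Or.inl ⟨rfl, rfl⟩)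
      ⟨2, rfl, .single ⟨Or.inr ⟨rfl, rfl⟩, by simp, by simp⟩⟩
end
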